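/- Let n ∈ ℕ, H a complex Hilbert space, and A an n×n quantum magic square on H. If A dilates to a quantum permutation matrix, then A can be positively perturbed: there exists a self-adjoint block operator X on ⊕_{(i,j)∈[n]×[n]} H whose ((i,j),(k,l)) block is 0 whenever i = k or j = l, such that φ(A) + X is a positive operator. -/

import Mathlib

noncomputable section

instance piLpCompleteSpace {ι : Type} (p : ENNReal) (β : ι → Type)
    [∀ i, UniformSpace (β i)] [∀ i, CompleteSpace (β i)] :
    CompleteSpace (PiLp p β) :=
  PiLp.completeSpace p β

structure HilbertC where
  carrier : Type
  [normed : NormedAddCommGroup carrier]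
  [ips : InnerProductSpace ℂ carrier]
  [complete : CompleteSpace carrier]

attribute [instance] HilbertC.normed HilbertC.ips HilbertC.complete

/-- The block operator on the Hilbert-space direct sum `⊕_{i ∈ ι} H` (realised as
`PiLp 2 (fun _ : ι => H)`) associated with a matrix `T` of bounded operators on `H`. -/
def blockOp {ι : Type} [Fintype ι] [DecidableEq ι]
    {H : Type} [NormedAddCommGroup H] [InnerProductSpace ℂ H] [CompleteSpace H]
    (T : ι → ι → H →L[ℂ] H) :
    PiLp 2 (fun _ : ι => H) →L[ℂ] PiLp 2 (fun _ : ι => H) :=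
  ((PiLp.continuousLinearEquiv 2 ℂ (fun _ : ι => H)).symm.toContinuousLinearMap).comp
    ((ContinuousLinearMap.pi
        (fun p => ∑ q, (T p q).comp (ContinuousLinearMap.proj q))).comp
      (PiLp.continuousLinearEquiv 2 ℂ (fun _ : ι => H)).toContinuousLinearMap)

/-- An `n × n` quantum magic square on the Hilbert space `H`. -/
def IsQMS {n : ℕ} {H : Type} [NormedAddCommGroup H] [InnerProductSpace ℂ H] [CompleteSpace H]
    (A : Fin n → Fin n → H →L[ℂ] H) : Prop :=
  (∀ i j, (A i j).IsPositive) ∧ (∀ i, ∑ k, A i k = 1) ∧ (∀ j, ∑ k, A k j = 1)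

/-- The blocks of the operator `φ(A)`: the `((i,j),(k,l))` block is
`δ_{(i,j),(k,l)} A_{i,j} − A_{i,j} A_{k,l}`. -/
def phiBlocks {n : ℕ} {H : Type} [NormedAddCommGroup H] [InnerProductSpace ℂ H] [CompleteSpace H]
    (A : Fin n → Fin n → H →L[ℂ] H) :
    (Fin n × Fin n) → (Fin n × Fin n) → H →L[ℂ] H :=
  fun p q => (if p = q then A p.1 p.2 else 0) - A p.1 p.2 * A q.1 q.2

/-- `A` can be positively perturbed: there is a self-adjoint block operator `X` whose
`((i,j),(k,l))` block vanishes whenever `i = k` or `j = l`, with `φ(A) + X ≥ 0`. -/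
def CanPerturb {n : ℕ} {H : Type} [NormedAddCommGroup H] [InnerProductSpace ℂ H] [CompleteSpace H]
    (A : Fin n → Fin n → H →L[ℂ] H) : Prop :=
  ∃ X : (Fin n × Fin n) → (Fin n × Fin n) → H →L[ℂ] H,
    IsSelfAdjoint (blockOp X) ∧
    (∀ p q : Fin n × Fin n, p.1 = q.1 ∨ p.2 = q.2 → X p q = 0) ∧
    (blockOp (phiBlocks A) + blockOp X).IsPositive

/-- `A` dilates to a quantum permutation matrix. -/
def DilatesToQPM {n : ℕ} {H : Type} [NormedAddCommGroup H] [InnerProductSpace ℂ H]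
    [CompleteSpace H] (A : Fin n → Fin n → H →L[ℂ] H) : Prop :=
  ∃ (K : HilbertC) (Vi : H →L[ℂ] K.carrier) (P : Fin n → Fin n → K.carrier →L[ℂ] K.carrier),
    Isometry Vi ∧
    (∀ i j, IsSelfAdjoint (P i j) ∧ IsIdempotentElem (P i j)) ∧
    (∀ i, ∑ k, P i k = 1) ∧ (∀ j, ∑ k, P k j = 1) ∧
    ∀ i j, A i j = (ContinuousLinearMap.adjoint Vi).comp ((P i j).comp Vi)

/-!
Write `A_{ij} = V* P_{ij} V` with `V` an isometry and `P` a quantum permutation matrix, and take for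
`X` the off-diagonal part of the Gram matrix `[V* P_{ij} P_{kl} V]`. The blocks of `X` with `i = k`
or `j = l` vanish, because projections summing to `1` (a row or a column of `P`) are mutually
orthogonal. On the other hand `φ(A) + X = [V* P_{ij} (1 - V V*) P_{kl} V]`, and since `1 - V V*` is
a projection this is the Gram matrix of the operators `(1 - V V*) P_{ij} V`, hence positive.
-/

open ContinuousLinearMap

lemma IsStarProjection.mul_eq_zero_of_sum_eq_one {R ι : Type*} [NormedRing R] [StarRing R]
    [CStarRing R] [PartialOrder R] [StarOrderedRing R] [Fintype ι] [DecidableEq ι]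
    {p : ι → R} (hp : ∀ i, IsStarProjection (p i)) (hsum : ∑ i, p i = 1) {i j : ι}
    (hij : i ≠ j) : p i * p j = 0 := by
  set rest := ∑ k ∈ (Finset.univ.erase j).erase i, p k
  have hcompl : 1 - p j = p i + rest := by
    rw [← hsum, ← Finset.add_sum_erase Finset.univ p (Finset.mem_univ j),
      ← Finset.add_sum_erase _ p (Finset.mem_erase.2 ⟨hij, Finset.mem_univ i⟩)]
    abel
  -- `p j * (1 - p j) * p j = 0` splits into two positive terms, the first `(p i * p j)⋆ (p i * p j)`.
  have hconj : star (p j) * p i * p j + star (p j) * rest * p j = 0 := by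
    rw [← add_mul, ← mul_add, ← hcompl, (hp j).isSelfAdjoint.star_eq,
      (hp j).mul_one_sub_self, zero_mul]
  have hrest : 0 ≤ star (p j) * rest * p j :=
    star_left_conjugate_nonneg (Finset.sum_nonneg fun k _ => (hp k).nonneg) _
  have hzero : star (p j) * p i * p j = 0 :=
    le_antisymm (hconj ▸ le_add_of_nonneg_right hrest)
      (star_left_conjugate_nonneg (hp i).nonneg _)
  rw [← CStarRing.star_mul_self_eq_zero_iff, ← hzero, star_mul, (hp i).isSelfAdjoint.star_eq,
    mul_assoc, ← mul_assoc (p i), (hp i).isIdempotentElem.eq, mul_assoc]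

section BlockOperators

variable {ι : Type} {H K : Type} [NormedAddCommGroup H] [InnerProductSpace ℂ H]
  [NormedAddCommGroup K] [InnerProductSpace ℂ K]

def blockCol (C : ι → K →L[ℂ] H) : K →L[ℂ] PiLp 2 (fun _ : ι => H) :=
  (PiLp.continuousLinearEquiv 2 ℂ (fun _ : ι => H)).symm.toContinuousLinearMap ∘L
    ContinuousLinearMap.pi C

@[simp]
lemma blockCol_apply (C : ι → K →L[ℂ] H) (y : K) (p : ι) : blockCol C y p = C p y := rfl

variable [Fintype ι]

def blockRow (R : ι → H →L[ℂ] K) : PiLp 2 (fun _ : ι => H) →L[ℂ] K :=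
  ∑ q, R q ∘L PiLp.proj 2 (fun _ : ι => H) q

lemma blockRow_apply (R : ι → H →L[ℂ] K) (x : PiLp 2 (fun _ : ι => H)) :
    blockRow R x = ∑ q, R q (x q) := by
  simp [blockRow]

variable [CompleteSpace H] [CompleteSpace K]

lemma adjoint_blockRow (R : ι → H →L[ℂ] K) :
    adjoint (blockRow R) = blockCol fun p => adjoint (R p) := by
  refine ((eq_adjoint_iff _ _).2 fun y x => ?_).symm
  simp [PiLp.inner_apply, blockRow_apply, inner_sum, adjoint_inner_left]

variable [DecidableEq ι]

@[simp]
lemma blockOp_apply (T : ι → ι → H →L[ℂ] H) (x : PiLp 2 (fun _ : ι => H)) (p : ι) :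
    blockOp T x p = ∑ q, T p q (x q) := by
  simp [blockOp]

lemma blockOp_add (T S : ι → ι → H →L[ℂ] H) : blockOp (T + S) = blockOp T + blockOp S := by
  ext x p
  simp [Finset.sum_add_distrib]

lemma inner_blockOp_apply (T : ι → ι → H →L[ℂ] H) (x y : PiLp 2 (fun _ : ι => H)) :
    inner ℂ (blockOp T x) y = ∑ p, ∑ q, inner ℂ (T p q (x q)) (y p) := by
  simp [PiLp.inner_apply, sum_inner]

lemma adjoint_blockOp (T : ι → ι → H →L[ℂ] H) :
    adjoint (blockOp T) = blockOp fun p q => adjoint (T q p) := by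
  refine ((eq_adjoint_iff _ _).2 fun x y => ?_).symm
  rw [inner_blockOp_apply, ← inner_conj_symm, inner_blockOp_apply, map_sum, Finset.sum_comm]
  simp_rw [map_sum, inner_conj_symm, adjoint_inner_left]

lemma isSelfAdjoint_blockOp {T : ι → ι → H →L[ℂ] H} (hT : ∀ p q, adjoint (T p q) = T q p) :
    IsSelfAdjoint (blockOp T) := by
  rw [isSelfAdjoint_iff', adjoint_blockOp]
  simp_rw [hT]

lemma blockOp_adjoint_comp (R : ι → H →L[ℂ] K) :
    blockOp (fun p q => adjoint (R p) ∘L R q) = adjoint (blockRow R) ∘L blockRow R := by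
  ext x p
  simp [adjoint_blockRow, blockRow_apply]

lemma isPositive_blockOp_adjoint_comp (R : ι → H →L[ℂ] K) :
    (blockOp fun p q => adjoint (R p) ∘L R q).IsPositive := by
  rw [blockOp_adjoint_comp]
  exact isPositive_adjoint_comp_self _

end BlockOperators

section Compression

variable {H K : Type} [NormedAddCommGroup H] [InnerProductSpace ℂ H] [CompleteSpace H]
  [NormedAddCommGroup K] [InnerProductSpace ℂ K] [CompleteSpace K]

def offDiagGram {ι : Type} [DecidableEq ι] (W : ι → H →L[ℂ] K) (p q : ι) : H →L[ℂ] H :=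
  if p = q then 0 else adjoint (W p) ∘L W q

lemma isSelfAdjoint_blockOp_offDiagGram {ι : Type} [Fintype ι] [DecidableEq ι]
    (W : ι → H →L[ℂ] K) : IsSelfAdjoint (blockOp (offDiagGram W)) :=
  isSelfAdjoint_blockOp fun p q => by
    by_cases h : p = q <;> simp [offDiagGram, h, eq_comm, adjoint_comp]

lemma offDiagGram_comp_eq_zero {ι : Type} [DecidableEq ι] {V : H →L[ℂ] K} {P : ι → K →L[ℂ] K}
    (hP : ∀ p, IsSelfAdjoint (P p)) {p q : ι} (hPP : p ≠ q → P p * P q = 0) :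
    offDiagGram (fun p => P p ∘L V) p q = 0 := by
  by_cases h : p = q
  · simp [offDiagGram, h]
  · rw [offDiagGram, if_neg h, adjoint_comp, isSelfAdjoint_iff'.1 (hP p), comp_assoc,
      ← comp_assoc _ _ V, ← mul_def, hPP h, zero_comp, comp_zero]

lemma isStarProjection_one_sub_comp_adjoint {V : H →L[ℂ] K} (hV : adjoint V ∘L V = 1) :
    IsStarProjection (1 - V ∘L adjoint V) := by
  refine IsStarProjection.one_sub ⟨?_, ?_⟩
  · rw [IsIdempotentElem, mul_def, comp_assoc, ← comp_assoc _ V, hV, one_def, id_comp]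
  · rw [isSelfAdjoint_iff', adjoint_comp, adjoint_adjoint]

lemma phiBlocks_compression_add_offDiagGram {n : ℕ} {V : H →L[ℂ] K}
    {P : Fin n → Fin n → K →L[ℂ] K} (hV : adjoint V ∘L V = 1)
    (hP : ∀ i j, IsStarProjection (P i j)) (p q : Fin n × Fin n) :
    phiBlocks (fun i j => adjoint V ∘L (P i j ∘L V)) p q
        + offDiagGram (fun p => P p.1 p.2 ∘L V) p q
      = adjoint ((1 - V ∘L adjoint V) ∘L P p.1 p.2 ∘L V)
          ∘L ((1 - V ∘L adjoint V) ∘L P q.1 q.2 ∘L V) := by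
  have hPadj : ∀ i j, adjoint (P i j) = P i j := fun i j =>
    isSelfAdjoint_iff'.1 (hP i j).isSelfAdjoint
  have hPP : ∀ i j y, P i j (P i j y) = P i j y := fun i j y =>
    congrArg (fun T => T y) (hP i j).isIdempotentElem.eq
  have hQ := isStarProjection_one_sub_comp_adjoint hV
  rw [adjoint_comp, adjoint_comp, hPadj, comp_assoc, ← comp_assoc _ _ (P q.1 q.2 ∘L V),
    isSelfAdjoint_iff'.1 hQ.isSelfAdjoint, ← mul_def, hQ.isIdempotentElem.eq]
  ext x
  by_cases h : p = q
  · subst h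
    simp [phiBlocks, offDiagGram, hPP]
  · simp only [phiBlocks, h, ↓reduceIte, zero_sub, offDiagGram, adjoint_comp, hPadj, add_apply,
      neg_apply, mul_apply_eq_comp, comp_apply, sub_comp, comp_sub, sub_apply, one_apply_eq_self]
    abel

end Compression

theorem stmt4_general (n : ℕ)
    (H : Type) [NormedAddCommGroup H] [InnerProductSpace ℂ H] [CompleteSpace H]
    (A : Fin n → Fin n → H →L[ℂ] H)
    (hdil : DilatesToQPM A) :
    CanPerturb A := by
  obtain ⟨K, V, P, hV, hP, hrow, hcol, hA⟩ := hdil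
  obtain rfl : A = fun i j => adjoint V ∘L (P i j ∘L V) := funext₂ hA
  have hproj : ∀ i j, IsStarProjection (P i j) := fun i j => ⟨(hP i j).2, (hP i j).1⟩
  refine ⟨offDiagGram fun p => P p.1 p.2 ∘L V, isSelfAdjoint_blockOp_offDiagGram _, ?_, ?_⟩
  · rintro ⟨i, j⟩ ⟨k, l⟩ hik
    refine offDiagGram_comp_eq_zero (V := V) (P := fun p : Fin n × Fin n => P p.1 p.2)
      (fun p => (hproj p.1 p.2).isSelfAdjoint) fun hne => ?_
    obtain rfl | rfl := hik
    · exact IsStarProjection.mul_eq_zero_of_sum_eq_one (hproj i) (hrow i) (by simpa using hne)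
    · exact IsStarProjection.mul_eq_zero_of_sum_eq_one (hproj · j) (hcol j) (by simpa using hne)
  · rw [← blockOp_add, show phiBlocks _ + offDiagGram _ = _ from funext₂
      (phiBlocks_compression_add_offDiagGram ((isometry_iff_adjoint_comp_self V).1 hV) hproj)]
    exact isPositive_blockOp_adjoint_comp _

theorem stmt4 (n : ℕ)
    (H : Type) [NormedAddCommGroup H] [InnerProductSpace ℂ H] [CompleteSpace H]
    (A : Fin n → Fin n → H →L[ℂ] H) (hA : IsQMS A)
    (hdil : DilatesToQPM A) :
    CanPerturb A :=
  stmt4_general n H A hdil
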